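/- arXiv:2107.03914 — 5 statements merged into one kernel-verified Lean document; each statement's English description precedes it below -/
import Mathlib

section
/- Let R be a commutative ring and let P be a faithful finitely generated projective R-module. Then End_R(P) is an Azumaya algebra over R, i.e. the canonical map End_R(P) ⊗_R End_R(P)ᵒᵖ → End_R(End_R(P)) is an isomorphism of R-algebras. -/
open TensorProduct

/-- The canonical `R`-linear map `A ⊗[R] Aᵐᵒᵖ →ₗ[R] End_R(A)` sending `a ⊗ b` to
`x ↦ a * x * b`.  An `R`-algebra `A`, faithful finitely generated projective as an `R`-module,
is Azumaya precisely when this map is bijective. -/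
noncomputable def azumayaMap (R : Type*) [CommRing R] (A : Type*) [Ring A] [Algebra R A] :
    A ⊗[R] Aᵐᵒᵖ →ₗ[R] Module.End R A :=
  TensorProduct.lift
    (LinearMap.mk₂ R
      (fun a b => (LinearMap.mulRight R b.unop).comp (LinearMap.mulLeft R a))
      (by
        intro a a' b
        ext x
        simp [add_mul])
      (by
        intro c a b
        ext x
        simp [smul_mul_assoc])
      (by
        intro a b b'
        ext x
        simp [mul_add])
      (by
        intro c a b
        ext x
        simp [MulOpposite.unop_smul, mul_smul_comm]))

namespace Statement8Aux

variable {R : Type*} [CommRing R] {P : Type*} [AddCommGroup P] [Module R P]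

lemma azumayaMap_tmul {A : Type*} [Ring A] [Algebra R A] (a : A) (b : Aᵐᵒᵖ) :
    azumayaMap R A (a ⊗ₜ b) = (LinearMap.mulRight R b.unop).comp (LinearMap.mulLeft R a) := by
  simp [azumayaMap]

/-- `LinearMap.smulRight` bundled as a linear map in the vector argument. -/
def sR (f : P →ₗ[R] R) : P →ₗ[R] (P →ₗ[R] P) where
  toFun v := f.smulRight v
  map_add' a b := by ext q; simp [smul_add]
  map_smul' r v := by
    ext q
    simp only [LinearMap.smulRight_apply, RingHom.id_apply, LinearMap.smul_apply]
    rw [smul_comm]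

@[simp] lemma sR_apply (f : P →ₗ[R] R) (v q : P) : sR f v q = f q • v := rfl

variable {n : ℕ} (x : Fin n → P) (f : Fin n → (P →ₗ[R] R))

/-- Explicit inverse of the Azumaya map for `End R P`, built from a dual family. -/
noncomputable def ginv : Module.End R (Module.End R P) →ₗ[R]
    (Module.End R P) ⊗[R] (Module.End R P)ᵐᵒᵖ :=
  ∑ j : Fin n, ∑ k : Fin n, ∑ l : Fin n,
    ((TensorProduct.mk R (Module.End R P) (Module.End R P)ᵐᵒᵖ).flip
        (MulOpposite.op ((f l).smulRight (x k)))) ∘ₗ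
      sR (f j) ∘ₗ LinearMap.applyₗ (x l) ∘ₗ LinearMap.applyₗ ((f k).smulRight (x j))

lemma ginv_apply (Φ : Module.End R (Module.End R P)) :
    ginv x f Φ = ∑ j : Fin n, ∑ k : Fin n, ∑ l : Fin n,
      ((f j).smulRight (Φ ((f k).smulRight (x j)) (x l))) ⊗ₜ[R]
        MulOpposite.op ((f l).smulRight (x k)) := by
  simp [ginv, sR, TensorProduct.mk_apply]

variable (hdual : ∀ p, ∑ i, f i p • x i = p)

include hdual

lemma hL (a : Module.End R P) : ∑ j, sR (f j) (a (x j)) = a := by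
  ext q
  simp only [LinearMap.coe_sum, Finset.sum_apply, sR_apply]
  conv_rhs => rw [← hdual q]
  rw [map_sum]
  simp

lemma hX (X : Module.End R P) :
    ∑ a : Fin n, ∑ b : Fin n, f a (X (x b)) • (f b).smulRight (x a) = X := by
  ext q
  simp only [LinearMap.coe_sum, Finset.sum_apply, LinearMap.smul_apply,
    LinearMap.smulRight_apply]
  rw [Finset.sum_comm]
  have h1 : ∀ b : Fin n, ∑ a : Fin n, f a (X (x b)) • f b q • x a
      = f b q • X (x b) := by
    intro b
    rw [Finset.sum_congr rfl (fun a _ => smul_comm _ _ _), ← Finset.smul_sum, hdual]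
  rw [Finset.sum_congr rfl fun b _ => h1 b]
  conv_rhs => rw [← hdual q, map_sum]
  simp

lemma bij : Function.Bijective (azumayaMap R (Module.End R P)) := by
  rw [Function.bijective_iff_has_inverse]
  refine ⟨ginv x f, ?_, ?_⟩
  · -- left inverse
    have h : (ginv x f) ∘ₗ (azumayaMap R (Module.End R P)) = LinearMap.id := by
      apply TensorProduct.ext'
      intro a c
      rw [LinearMap.comp_apply, azumayaMap_tmul, ginv_apply, LinearMap.id_apply]
      have hterm : ∀ j k l : Fin n,
          (((LinearMap.mulRight R c.unop).comp (LinearMap.mulLeft R a))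
              ((f k).smulRight (x j))) (x l)
            = f k (c.unop (x l)) • a (x j) := by
        intro j k l
        simp [Module.End.mul_apply]
      calc ∑ j : Fin n, ∑ k : Fin n, ∑ l : Fin n,
            ((f j).smulRight ((((LinearMap.mulRight R c.unop).comp
                (LinearMap.mulLeft R a)) ((f k).smulRight (x j))) (x l))) ⊗ₜ[R]
              MulOpposite.op ((f l).smulRight (x k))
          = ∑ j : Fin n, ∑ k : Fin n, ∑ l : Fin n,
            (sR (f j) (a (x j))) ⊗ₜ[R]
              (f k (c.unop (x l)) • MulOpposite.op ((f l).smulRight (x k))) := by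
            refine Finset.sum_congr rfl fun j _ => Finset.sum_congr rfl fun k _ =>
              Finset.sum_congr rfl fun l _ => ?_
            rw [hterm j k l]
            have : (f j).smulRight (f k (c.unop (x l)) • a (x j))
                = f k (c.unop (x l)) • sR (f j) (a (x j)) := (sR (f j)).map_smul _ _
            rw [this, TensorProduct.smul_tmul]
        _ = (∑ j : Fin n, sR (f j) (a (x j))) ⊗ₜ[R]
              (∑ k : Fin n, ∑ l : Fin n,
                f k (c.unop (x l)) • MulOpposite.op ((f l).smulRight (x k))) := by
            rw [TensorProduct.sum_tmul]
            refine Finset.sum_congr rfl fun j _ => ?_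
            rw [TensorProduct.tmul_sum]
            exact Finset.sum_congr rfl fun k _ => by rw [TensorProduct.tmul_sum]
        _ = a ⊗ₜ[R] c := by
            rw [hL x f hdual a]
            congr 1
            have : (∑ k : Fin n, ∑ l : Fin n,
                f k (c.unop (x l)) • MulOpposite.op ((f l).smulRight (x k)))
                = MulOpposite.op (∑ k : Fin n, ∑ l : Fin n,
                    f k (c.unop (x l)) • (f l).smulRight (x k)) := by
              simp
            rw [this, hX x f hdual c.unop, MulOpposite.op_unop]
    intro t
    have := LinearMap.congr_fun h t
    simpa using this
  · -- right inverse
    intro Φ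
    ext X q
    rw [ginv_apply, map_sum]
    simp only [map_sum, azumayaMap_tmul, MulOpposite.unop_op, LinearMap.coe_sum,
      Finset.sum_apply, LinearMap.comp_apply, LinearMap.mulRight_apply,
      LinearMap.mulLeft_apply, Module.End.mul_apply, LinearMap.smulRight_apply, map_smul,
      LinearMap.smul_apply]
    -- LHS: ∑ j k l, f j (f l q • X (x k)) • Φ (E j k) (x l)
    conv_rhs => rw [← hX x f hdual X, map_sum]
    simp only [map_sum, map_smul, LinearMap.coe_sum, Finset.sum_apply, LinearMap.smul_apply]
    refine Finset.sum_congr rfl fun j _ => Finset.sum_congr rfl fun k _ => ?_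
    have h1 : ∀ (Y : Module.End R P), ∑ l : Fin n, f l q • Y (x l) = Y q := by
      intro Y
      conv_rhs => rw [← hdual q, map_sum]
      simp
    calc ∑ l : Fin n, f l q • f j (X (x k)) • Φ ((f k).smulRight (x j)) (x l)
        = ∑ l : Fin n, f j (X (x k)) • f l q • Φ ((f k).smulRight (x j)) (x l) := by
          refine Finset.sum_congr rfl fun l _ => ?_
          rw [smul_comm]
      _ = f j (X (x k)) • Φ ((f k).smulRight (x j)) q := by
          rw [← Finset.smul_sum, h1]

end Statement8Aux

/-- if `P` is a faithful finitely generated projective module over a commutative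
ring `R`, then `End_R(P)` is an Azumaya algebra over `R`: it is faithful, finitely generated and
projective over `R` and the canonical map
`End_R(P) ⊗[R] End_R(P)ᵐᵒᵖ → End_R(End_R(P))` is an isomorphism. -/
theorem statement8 (R : Type*) [CommRing R] (P : Type*) [AddCommGroup P] [Module R P]
    [Module.Finite R P] [Module.Projective R P] [FaithfulSMul R P] :
    Module.Finite R (Module.End R P) ∧ Module.Projective R (Module.End R P) ∧
      FaithfulSMul R (Module.End R P) ∧
      Function.Bijective (azumayaMap R (Module.End R P)) := by
  classical
  obtain ⟨n, π, hπ⟩ := Module.Finite.exists_fin' R P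
  obtain ⟨s, hs⟩ := π.exists_rightInverse_of_surjective (LinearMap.range_eq_top.2 hπ)
  have hs' : ∀ p, π (s p) = p := fun p => LinearMap.congr_fun hs p
  -- restriction/extension maps between End P and End (Fin n → R)
  let r : Module.End R (Fin n → R) →ₗ[R] Module.End R P :=
    { toFun := fun Y => π ∘ₗ Y ∘ₗ s
      map_add' := fun Y Z => by ext q; simp
      map_smul' := fun c Y => by ext q; simp }
  let i : Module.End R P →ₗ[R] Module.End R (Fin n → R) :=
    { toFun := fun X => s ∘ₗ X ∘ₗ π
      map_add' := fun Y Z => by ext q; simp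
      map_smul' := fun c Y => by ext q; simp }
  have hri : ∀ X, r (i X) = X := by
    intro X
    ext q
    simp [r, i, hs']
  refine ⟨?_, ?_, ?_, ?_⟩
  · exact Module.Finite.of_surjective r fun X => ⟨i X, hri X⟩
  · exact Module.Projective.of_split i r (by ext X : 1; exact hri X)
  · refine ⟨fun {r1 r2} h => eq_of_smul_eq_smul (M := R) (α := P) fun p => ?_⟩
    simpa using LinearMap.congr_fun (h (1 : Module.End R P)) p
  · -- dual family
    refine Statement8Aux.bij (fun j => π (Pi.single j 1))
      (fun j => (LinearMap.proj j) ∘ₗ s) (fun p => ?_)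
    simp only [LinearMap.comp_apply, LinearMap.proj_apply]
    have : ∀ j : Fin n, s p j • π (Pi.single j 1) = π (Pi.single j (s p j)) := by
      intro j
      rw [← map_smul]
      congr 1
      ext t
      by_cases h : t = j <;> simp [h, Pi.single_apply]
    rw [Finset.sum_congr rfl fun j _ => this j, ← map_sum]
    rw [Finset.univ_sum_single (s p)]
    exact hs' p
end

section
/- Let R be a commutative ring and let A, B be Azumaya algebras over R. Then A ⊗_R B is an Azumaya algebra over R. -/
open TensorProduct

-- retract lemma
theorem bij_of_retract {R α β α₀ β₀ : Type*} [CommRing R]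
    [AddCommGroup α] [Module R α] [AddCommGroup β] [Module R β]
    [AddCommGroup α₀] [Module R α₀] [AddCommGroup β₀] [Module R β₀]
    (t : α →ₗ[R] β) (t₀ : α₀ →ₗ[R] β₀)
    (fs : α →ₗ[R] α₀) (fr : α₀ →ₗ[R] α) (gs : β →ₗ[R] β₀) (gr : β₀ →ₗ[R] β)
    (hf : fr ∘ₗ fs = LinearMap.id) (hg : gr ∘ₗ gs = LinearMap.id)
    (comm1 : gs ∘ₗ t = t₀ ∘ₗ fs) (comm2 : gr ∘ₗ t₀ = t ∘ₗ fr)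
    (h₀ : Function.Bijective t₀) : Function.Bijective t := by
  constructor
  · intro x y hxy
    have h1 : t₀ (fs x) = t₀ (fs y) := by
      have c1 := LinearMap.congr_fun comm1 x
      have c2 := LinearMap.congr_fun comm1 y
      simp only [LinearMap.comp_apply] at c1 c2
      rw [← c1, ← c2, hxy]
    have h2 : fs x = fs y := h₀.1 h1
    calc x = fr (fs x) := (LinearMap.congr_fun hf x).symm
    _ = fr (fs y) := by rw [h2]
    _ = y := LinearMap.congr_fun hf y
  · intro y
    obtain ⟨z, hz⟩ := h₀.2 (gs y)
    refine ⟨fr z, ?_⟩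
    have := LinearMap.congr_fun comm2 z
    simp only [LinearMap.comp_apply] at this
    rw [← this, hz]
    exact LinearMap.congr_fun hg y

section HTH
variable (R M N P Q : Type*) [CommRing R]
  [AddCommGroup M] [Module R M] [AddCommGroup N] [Module R N]
  [AddCommGroup P] [Module R P] [AddCommGroup Q] [Module R Q]

theorem rT_bij [Module.Finite R M] [Module.Projective R M] :
    Function.Bijective (TensorProduct.rTensorHomToHomRTensor (RingHom.id R) M P Q) := by
  obtain ⟨n, p, i, -, -, hpi⟩ := Module.Finite.exists_comp_eq_id_of_projective R M
  refine bij_of_retract _ (TensorProduct.rTensorHomToHomRTensor (RingHom.id R) (Fin n → R) P Q)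
    (LinearMap.rTensor Q (LinearMap.lcomp R P p)) (LinearMap.rTensor Q (LinearMap.lcomp R P i))
    (LinearMap.lcomp R (P ⊗[R] Q) p) (LinearMap.lcomp R (P ⊗[R] Q) i) ?_ ?_ ?_ ?_ ?_
  · refine TensorProduct.ext' fun f q => ?_
    simp only [LinearMap.comp_apply, LinearMap.rTensor_tmul, LinearMap.lcomp_apply',
      LinearMap.id_coe, id_eq]
    rw [LinearMap.comp_assoc, hpi, LinearMap.comp_id]
  · ext f x
    exact congrArg f (LinearMap.congr_fun hpi x)
  · refine TensorProduct.ext' fun f q => ?_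
    ext x
    simp
  · refine TensorProduct.ext' fun f q => ?_
    ext x
    simp
  · rw [← rTensorHomEquivHomRTensor_toLinearMap]
    exact (rTensorHomEquivHomRTensor R (Fin n → R) P Q).bijective

theorem lT_bij [Module.Finite R M] [Module.Projective R M] :
    Function.Bijective (TensorProduct.lTensorHomToHomLTensor (RingHom.id R) M P Q) := by
  obtain ⟨n, p, i, -, -, hpi⟩ := Module.Finite.exists_comp_eq_id_of_projective R M
  refine bij_of_retract _ (TensorProduct.lTensorHomToHomLTensor (RingHom.id R) (Fin n → R) P Q)
    (LinearMap.lTensor P (LinearMap.lcomp R Q p)) (LinearMap.lTensor P (LinearMap.lcomp R Q i))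
    (LinearMap.lcomp R (P ⊗[R] Q) p) (LinearMap.lcomp R (P ⊗[R] Q) i) ?_ ?_ ?_ ?_ ?_
  · refine TensorProduct.ext' fun x f => ?_
    simp only [LinearMap.comp_apply, LinearMap.lTensor_tmul, LinearMap.lcomp_apply',
      LinearMap.id_coe, id_eq]
    rw [LinearMap.comp_assoc, hpi, LinearMap.comp_id]
  · ext f x
    exact congrArg f (LinearMap.congr_fun hpi x)
  · refine TensorProduct.ext' fun x f => ?_
    ext m
    simp
  · refine TensorProduct.ext' fun x f => ?_
    ext m
    simp
  · rw [← lTensorHomEquivHomLTensor_toLinearMap]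
    exact (lTensorHomEquivHomLTensor R (Fin n → R) P Q).bijective

end HTH

theorem hth_bij (R M N P Q : Type*) [CommRing R]
    [AddCommGroup M] [Module R M] [AddCommGroup N] [Module R N]
    [AddCommGroup P] [Module R P] [AddCommGroup Q] [Module R Q]
    [Module.Finite R M] [Module.Projective R M]
    [Module.Finite R N] [Module.Projective R N] :
    Function.Bijective (TensorProduct.homTensorHomMap (RingHom.id R) M N P Q) := by
  set u := TensorProduct.lTensorHomToHomLTensor (RingHom.id R) N P Q with hu_def
  have hu := lT_bij R N P Q
  let e := LinearEquiv.ofBijective u hu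
  set mid : (M →ₗ[R] P ⊗[R] (N →ₗ[R] Q)) →ₗ[R] (M →ₗ[R] (N →ₗ[R] P ⊗[R] Q)) :=
    LinearMap.llcomp R M _ _ u with hmid_def
  have hmid : Function.Bijective mid := by
    have h : ⇑mid = ⇑((LinearEquiv.refl R M).arrowCongr e) := by
      funext f
      ext m
      simp [hmid_def, e]
    rw [h]
    exact ((LinearEquiv.refl R M).arrowCongr e).bijective
  have key : TensorProduct.homTensorHomMap (RingHom.id R) M N P Q =
      (TensorProduct.lift.equiv (RingHom.id R) M N (P ⊗[R] Q)).toLinearMap ∘ₗ mid ∘ₗ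
        TensorProduct.rTensorHomToHomRTensor (RingHom.id R) M P (N →ₗ[R] Q) := by
    refine TensorProduct.ext' fun f g => ?_
    refine TensorProduct.ext' fun m n => ?_
    simp [hmid_def, hu_def]
  rw [key]
  simp only [LinearMap.coe_comp]
  exact ((TensorProduct.lift.equiv (RingHom.id R) M N (P ⊗[R] Q)).bijective.comp hmid).comp
    (rT_bij R M P (N →ₗ[R] Q))

set_option maxHeartbeats 1000000 in
set_option synthInstance.maxHeartbeats 200000 in
/-- the tensor product of two Azumaya algebras over a commutative ring `R` is again
an Azumaya algebra over `R`. -/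
theorem statement9 (R : Type*) [CommRing R]
    (A : Type*) [Ring A] [Algebra R A]
    [Module.Finite R A] [Module.Projective R A] [FaithfulSMul R A]
    (hA : Function.Bijective (azumayaMap R A))
    (B : Type*) [Ring B] [Algebra R B]
    [Module.Finite R B] [Module.Projective R B] [FaithfulSMul R B]
    (hB : Function.Bijective (azumayaMap R B)) :
    Module.Finite R (A ⊗[R] B) ∧ Module.Projective R (A ⊗[R] B) ∧ FaithfulSMul R (A ⊗[R] B) ∧
      Function.Bijective (azumayaMap R (A ⊗[R] B)) := by
  -- injectivity of algebraMap R B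
  have hinjB : Function.Injective (algebraMap R B) := by
    intro r s h
    exact FaithfulSMul.eq_of_smul_eq_smul (α := B) fun b => by
      rw [Algebra.smul_def, Algebra.smul_def, h]
  have hinjA : Function.Injective (algebraMap R A) := by
    intro r s h
    exact FaithfulSMul.eq_of_smul_eq_smul (α := A) fun a => by
      rw [Algebra.smul_def, Algebra.smul_def, h]
  refine ⟨inferInstance, inferInstance, ?_, ?_⟩
  · -- FaithfulSMul
    have hψ : Function.Injective
        (LinearMap.lTensor A (Algebra.linearMap R B)) :=
      Module.Flat.lTensor_preserves_injective_linearMap _ hinjB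
    have hmap : Function.Injective (algebraMap R (A ⊗[R] B)) := by
      intro r s h
      apply hinjA
      apply hψ.comp (TensorProduct.rid R A).symm.injective
      show (LinearMap.lTensor A (Algebra.linearMap R B)) ((TensorProduct.rid R A).symm _) =
        (LinearMap.lTensor A (Algebra.linearMap R B)) ((TensorProduct.rid R A).symm _)
      simpa [TensorProduct.rid_symm_apply, Algebra.TensorProduct.algebraMap_apply] using h
    exact ⟨fun {r s} h => hmap (by
      have := h (1 : A ⊗[R] B)
      rwa [Algebra.algebraMap_eq_smul_one, Algebra.algebraMap_eq_smul_one])⟩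
  · -- bijectivity
    let e1 : (A ⊗[R] B) ⊗[R] (A ⊗[R] B)ᵐᵒᵖ ≃ₗ[R] (A ⊗[R] Aᵐᵒᵖ) ⊗[R] (B ⊗[R] Bᵐᵒᵖ) :=
      (TensorProduct.congr (LinearEquiv.refl R (A ⊗[R] B))
        ((Algebra.TensorProduct.opAlgEquiv R R A B).symm.toLinearEquiv)) ≪≫ₗ
        TensorProduct.tensorTensorTensorComm R A B Aᵐᵒᵖ Bᵐᵒᵖ
    have key : azumayaMap R (A ⊗[R] B) ∘ₗ e1.symm.toLinearMap =
        TensorProduct.homTensorHomMap (RingHom.id R) A B A B ∘ₗ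
          TensorProduct.map (azumayaMap R A) (azumayaMap R B) := by
      refine TensorProduct.ext' fun x y => ?_
      induction x using TensorProduct.induction_on with
      | zero => simp only [TensorProduct.zero_tmul, map_zero]
      | add u v hu hv => simp only [TensorProduct.add_tmul, map_add, hu, hv]
      | tmul a a' =>
        induction y using TensorProduct.induction_on with
        | zero => simp only [TensorProduct.tmul_zero, map_zero]
        | add u v hu hv => simp only [TensorProduct.tmul_add, map_add, hu, hv]
        | tmul b b' =>
          refine LinearMap.ext fun z => ?_
          induction z using TensorProduct.induction_on with
          | zero => simp only [map_zero]
          | tmul u v =>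
            simp [e1, azumayaMap, Algebra.TensorProduct.opAlgEquiv_tmul,
              Algebra.TensorProduct.tmul_mul_tmul]
          | add u v hu hv => simp only [map_add, hu, hv]
    have key2 : azumayaMap R (A ⊗[R] B) =
        (TensorProduct.homTensorHomMap (RingHom.id R) A B A B ∘ₗ
          TensorProduct.map (azumayaMap R A) (azumayaMap R B)) ∘ₗ e1.toLinearMap := by
      rw [← key]
      ext x
      simp
    have hmapfg : Function.Bijective
        (TensorProduct.map (azumayaMap R A) (azumayaMap R B)) := by
      have h : TensorProduct.map (azumayaMap R A) (azumayaMap R B) =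
          (TensorProduct.congr (LinearEquiv.ofBijective _ hA)
            (LinearEquiv.ofBijective _ hB)).toLinearMap := by
        refine TensorProduct.ext' fun x y => ?_
        simp
      rw [h]
      exact (TensorProduct.congr _ _).bijective
    rw [key2]
    simp only [LinearMap.coe_comp]
    exact ((hth_bij R A B A B).comp hmapfg).comp e1.bijective
end

section
/- Let V be a commutative ring and consider the category of ℤ-graded V-modules with the convolution (Day) tensor product: (M ⊗ N)_k = ⊕_{i+j=k} M_i ⊗_V N_j. A graded module M is invertible for this tensor product if and only if there exists an integer d and an invertible V-module L such that M is isomorphic to L concentrated in degree d. -/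
open TensorProduct

section Helpers

variable {V : Type} [CommRing V]

/-- A linear equivalence between two subsingleton modules. -/
noncomputable def subsingletonLEquiv (A B : Type) [AddCommGroup A] [Module V A]
    [AddCommGroup B] [Module V B] [Subsingleton A] [Subsingleton B] : A ≃ₗ[V] B where
  toFun := 0
  map_add' := by intros; simp
  map_smul' := by intros; simp
  invFun := 0
  left_inv _ := Subsingleton.elim _ _
  right_inv _ := Subsingleton.elim _ _

/-- A direct sum all of whose components but one are subsingletons is linearly equivalent to
that component. -/
noncomputable def dsSingleEquiv {ι : Type} [DecidableEq ι] (P : ι → Type)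
    [∀ i, AddCommGroup (P i)] [∀ i, Module V (P i)] (i0 : ι)
    (h : ∀ i, i ≠ i0 → Subsingleton (P i)) :
    DirectSum ι P ≃ₗ[V] P i0 where
  __ := DirectSum.component V ι P i0
  invFun := DirectSum.lof V ι P i0
  left_inv x := by
    refine DFinsupp.ext fun i => ?_
    by_cases hi : i = i0
    · subst hi
      simp only [DirectSum.lof_eq_of, DirectSum.of_eq_same]
      rfl
    · haveI := h i hi
      exact Subsingleton.elim _ _
  right_inv m := DirectSum.component.lof_self V i0 m

lemma summand_subsingleton {ι : Type} (P : ι → Type)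
    [∀ i, AddCommGroup (P i)] [∀ i, Module V (P i)] [DecidableEq ι]
    (h : ∀ t : DirectSum ι P, t = 0) (i : ι) : Subsingleton (P i) := by
  refine subsingleton_of_forall_eq 0 fun m => ?_
  have h2 := congrArg (fun t : DirectSum ι P => t i) (h (DirectSum.of P i m))
  simpa [DirectSum.of_eq_same] using h2

lemma ds_eq_zero {ι : Type} (P : ι → Type)
    [∀ i, AddCommGroup (P i)] [∀ i, Module V (P i)]
    (h : ∀ i, Subsingleton (P i)) (t : DirectSum ι P) : t = 0 := by
  refine DFinsupp.ext fun i => ?_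
  haveI := h i
  exact Subsingleton.elim _ _

/-- If `B ⊗ C ≃ V` and `A ⊗ C` is trivial, then `A` is trivial. -/
lemma subsingleton_of_tensor_unit {A B C : Type} [AddCommGroup A] [Module V A]
    [AddCommGroup B] [Module V B] [AddCommGroup C] [Module V C]
    (e : (B ⊗[V] C) ≃ₗ[V] V) (h : Subsingleton (A ⊗[V] C)) : Subsingleton A := by
  haveI := h
  exact ((TensorProduct.rid V A).symm.trans
    ((TensorProduct.congr (LinearEquiv.refl V A) e.symm).trans
      ((TensorProduct.congr (LinearEquiv.refl V A) (TensorProduct.comm V B C)).trans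
        (TensorProduct.assoc V A C B).symm))).toEquiv.subsingleton

end Helpers

/-- The degree `k` piece of the Day convolution product of two `ℤ`-graded `V`-modules:
`(M ⊗ N)_k = ⊕_{i+j=k} M_i ⊗[V] N_j`. -/
abbrev ConvPiece (V : Type) [CommRing V] (M N : ℤ → ModuleCat.{0} V) (k : ℤ) : Type :=
  DirectSum {p : ℤ × ℤ // p.1 + p.2 = k} (fun p => TensorProduct V (M p.1.1) (N p.1.2))

/-- over a commutative ring `V` with no nontrivial idempotents, a `ℤ`-graded
`V`-module `M` is invertible for the convolution tensor product (i.e. there is a graded module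
`N` such that `M ⊗ N` is isomorphic to the unit: `V` in degree `0`, zero elsewhere) if and only
if `M` is concentrated in a single degree `d` where it is an invertible `V`-module. -/
theorem statement11 (V : Type) [CommRing V]
    (hV : ∀ e : V, e * e = e → e = 0 ∨ e = 1)
    (M : ℤ → ModuleCat.{0} V) :
    (∃ N : ℤ → ModuleCat.{0} V,
        Nonempty (ConvPiece V M N 0 ≃ₗ[V] V) ∧
        ∀ k : ℤ, k ≠ 0 → ∀ t : ConvPiece V M N k, t = 0) ↔
      (∃ d : ℤ,
        (∀ k : ℤ, k ≠ d → ∀ m : M k, m = 0) ∧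
        ∃ L : ModuleCat.{0} V, Nonempty (TensorProduct V (M d) L ≃ₗ[V] V)) := by
  classical
  have cast_equiv : ∀ (A B : ModuleCat.{0} V), A = B → (↥A ≃ₗ[V] ↥B) := by
    rintro A B rfl; exact LinearEquiv.refl V A
  constructor
  · rintro ⟨N, ⟨e⟩, hzero⟩
    rcases subsingleton_or_nontrivial V with hVs | hVn
    · -- trivial ring: everything is trivial
      haveI : ∀ k : ℤ, Subsingleton (M k) := fun k => Module.subsingleton V _
      haveI : Subsingleton (TensorProduct V (M 0) V) := inferInstance
      exact ⟨0, fun k _ m => Subsingleton.elim _ _,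
        ⟨ModuleCat.of V V, ⟨subsingletonLEquiv _ _⟩⟩⟩
    · set ι := {p : ℤ × ℤ // p.1 + p.2 = (0 : ℤ)} with hι
      set P : ι → Type := fun p => TensorProduct V (M p.1.1) (N p.1.2) with hP
      set u : DirectSum ι P := e.symm 1 with hu
      set ε : ι → V := fun i => e (DirectSum.lof V ι P i (u i)) with hε
      have key : ∀ (v : V) (i : ι), e.symm (v * ε i) = DirectSum.lof V ι P i (v • u i) := by
        intro v i
        rw [hε]
        rw [← smul_eq_mul, map_smul, e.symm_apply_apply, ← map_smul]
      have orth : ∀ i j : ι, i ≠ j → ε i * ε j = 0 := by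
        intro i j hij
        have h1 : e.symm (ε i * ε j) = DirectSum.lof V ι P j (ε i • u j) := key (ε i) j
        have h2 : e.symm (ε i * ε j) = DirectSum.lof V ι P i (ε j • u i) := by
          rw [mul_comm]; exact key (ε j) i
        have h3 : ε i • u j = 0 := by
          have h4 := congrArg (fun t : DirectSum ι P => t j) (h1.symm.trans h2)
          simp only [DirectSum.lof_eq_of, DirectSum.of_eq_same,
            DirectSum.of_eq_of_ne i j _ hij.symm] at h4
          exact h4
        have h5 : e.symm (ε i * ε j) = e.symm 0 := by
          rw [h1, h3, map_zero, map_zero]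
        exact e.symm.injective h5
      have hsum : ∑ i ∈ DFinsupp.support u, ε i = 1 := by
        have h1 : (∑ i ∈ DFinsupp.support u, DirectSum.lof V ι P i (u i)) = u := by
          simpa [DirectSum.lof_eq_of] using DirectSum.sum_support_of u
        calc ∑ i ∈ DFinsupp.support u, ε i
            = e (∑ i ∈ DFinsupp.support u, DirectSum.lof V ι P i (u i)) := by
              rw [map_sum]
          _ = e u := by rw [h1]
          _ = 1 := by rw [hu, e.apply_symm_apply]
      have idem : ∀ i ∈ DFinsupp.support u, ε i * ε i = ε i := by
        intro i hi
        have h1 : ε i * (∑ j ∈ DFinsupp.support u, ε j) = ε i := by rw [hsum, mul_one]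
        rw [Finset.mul_sum, Finset.sum_eq_single i
          (fun j _ hne => orth i j (Ne.symm hne)) (fun h => absurd hi h)] at h1
        exact h1
      obtain ⟨i0, hi0s, hi0⟩ := Finset.exists_ne_zero_of_sum_ne_zero
        (hsum.symm ▸ (one_ne_zero : (1 : V) ≠ 0))
      have hε0 : ε i0 = 1 := (hV _ (idem i0 hi0s)).resolve_left hi0
      -- all components other than i0 are trivial
      have comp_triv : ∀ i : ι, i ≠ i0 → ∀ m : P i, m = 0 := by
        intro i hi m
        have h1 : e.symm (e (DirectSum.lof V ι P i m) * ε i0)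
            = DirectSum.lof V ι P i0 ((e (DirectSum.lof V ι P i m)) • u i0) := key _ i0
        rw [hε0, mul_one, e.symm_apply_apply] at h1
        have h4 := congrArg (fun t : DirectSum ι P => t i) h1
        simpa [DirectSum.lof_eq_of, DirectSum.smul_apply, smul_zero,
          DirectSum.of_eq_same, DirectSum.of_eq_of_ne i0 i _ hi] using h4
      have comp_ss : ∀ i : ι, i ≠ i0 → Subsingleton (P i) := fun i hi =>
        subsingleton_of_forall_eq 0 (comp_triv i hi)
      -- the equivalence M d ⊗ N j0 ≃ V
      have e' : TensorProduct V (M i0.1.1) (N i0.1.2) ≃ₗ[V] V :=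
        (dsSingleEquiv P i0 comp_ss).symm.trans e
      refine ⟨i0.1.1, ?_, ⟨N i0.1.2, ⟨e'⟩⟩⟩
      intro k hk m
      haveI hkss : Subsingleton (TensorProduct V (M k) (N i0.1.2)) := by
        by_cases hk2 : k + i0.1.2 = 0
        · exact comp_ss ⟨(k, i0.1.2), hk2⟩
            (fun h => hk (by simpa using congrArg (fun p : ι => p.1.1) h))
        · exact summand_subsingleton (V := V) _ (hzero _ hk2) ⟨(k, i0.1.2), rfl⟩
      haveI : Subsingleton (M k) := subsingleton_of_tensor_unit e' hkss
      exact Subsingleton.elim _ _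
  · rintro ⟨d, hM, L, ⟨eL⟩⟩
    haveI hMss : ∀ k : ℤ, k ≠ d → Subsingleton (M k) := fun k hk =>
      subsingleton_of_forall_eq 0 (hM k hk)
    refine ⟨fun j => if j = -d then L else ModuleCat.of V PUnit, ?_, ?_⟩
    · set N : ℤ → ModuleCat.{0} V := fun j => if j = -d then L else ModuleCat.of V PUnit
        with hN
      have hNd : N (-d) = L := if_pos rfl
      set i0 : {p : ℤ × ℤ // p.1 + p.2 = (0 : ℤ)} := ⟨(d, -d), by ring⟩ with hi0
      have comp_ss : ∀ i : {p : ℤ × ℤ // p.1 + p.2 = (0 : ℤ)}, i ≠ i0 →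
          Subsingleton (TensorProduct V (M i.1.1) (N i.1.2)) := by
        intro i hi
        have h1 : i.1.1 ≠ d := by
          intro h
          apply hi
          have h2 : i.1.2 = -d := by have := i.2; omega
          exact Subtype.ext (Prod.ext h h2)
        haveI := hMss i.1.1 h1
        infer_instance
      refine ⟨(dsSingleEquiv _ i0 comp_ss).trans
        ((TensorProduct.congr (LinearEquiv.refl V (M d)) (cast_equiv _ _ hNd)).trans eL)⟩
    · intro k hk t
      refine ds_eq_zero (V := V) _ (fun i => ?_) t
      by_cases h1 : i.1.1 = d
      · have h2 : i.1.2 ≠ -d := by have := i.2; omega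
        haveI : Subsingleton ↥(if i.1.2 = -d then L else ModuleCat.of V PUnit) := by
          rw [if_neg h2]
          exact inferInstanceAs (Subsingleton PUnit)
        infer_instance
      · haveI := hMss i.1.1 h1
        infer_instance
end

section
/- Let R be a commutative ring and let x ∈ R. Let M be an R-module. Suppose M → M[1/x] is the localization map and M̂ = lim_n M/xⁿM the x-adic completion. If the kernel of M → M[1/x] and the kernel of M → M̂ intersect trivially only when x-power torsion elements that are infinitely x-divisible vanish, then: every element m ∈ M that maps to 0 both in M[1/x] and in M̂ is zero, provided M has bounded x-power torsion (there exists N with x^N killing all x-power torsion of M). -/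
open Pointwise

/-- let `R` be a commutative ring, `x ∈ R`, and `M` an `R`-module with bounded
`x`-power torsion.  If `m ∈ M` maps to `0` in the localization `M[1/x]` and to `0` in the
`x`-adic completion `lim_n M/xⁿM` (i.e. `m ∈ xⁿM` for all `n`), then `m = 0`. -/
theorem statement15 (R : Type*) [CommRing R] (x : R)
    (M : Type*) [AddCommGroup M] [Module R M]
    (hbd : ∃ N : ℕ, ∀ m : M, (∃ k : ℕ, x ^ k • m = 0) → x ^ N • m = 0)
    (m : M)
    (h1 : LocalizedModule.mkLinearMap (Submonoid.powers x) M m = 0)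
    (h2 : ∀ n : ℕ,
      (Submodule.Quotient.mk m :
        M ⧸ (Ideal.span {x} ^ n • (⊤ : Submodule R M))) = 0) :
    m = 0 := by
  obtain ⟨N, hN⟩ := hbd
  -- m is x-power torsion, from h1
  have htor : ∃ k : ℕ, x ^ k • m = 0 := by
    rw [LocalizedModule.mkLinearMap_apply] at h1
    rw [show (0 : LocalizedModule (Submonoid.powers x) M) = LocalizedModule.mk 0 1 from (LocalizedModule.zero_mk 1).symm,
      LocalizedModule.mk_eq] at h1
    obtain ⟨⟨u, k, rfl⟩, hu⟩ := h1
    simp only [one_smul, smul_zero] at hu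
    exact ⟨k, hu⟩
  -- m ∈ x^N • M
  have hm : m ∈ (Ideal.span {x} ^ N • (⊤ : Submodule R M)) := by
    have := h2 N
    rwa [Submodule.Quotient.mk_eq_zero] at this
  rw [Ideal.span_singleton_pow, Submodule.ideal_span_singleton_smul] at hm
  have hm' : m ∈ (x ^ N) • ((⊤ : Submodule R M) : Set M) := by
    rwa [← Submodule.coe_pointwise_smul, SetLike.mem_coe]
  obtain ⟨m', -, rfl⟩ := hm'
  -- m' is x-power torsion
  obtain ⟨k, hk⟩ := htor
  have : x ^ N • m' = 0 := by
    apply hN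
    exact ⟨k + N, by rw [pow_add, mul_smul]; exact hk⟩
  exact this
end

section
/- Let R be a commutative ring, x ∈ R, and let M be an R-module with no x-torsion (multiplication by x on M is injective). Let M̂ denote the x-adic completion of M and M[1/x] the localization. Then the square with vertices M, M[1/x], M̂, M̂[1/x] is cartesian: the natural map M → M[1/x] ×_{M̂[1/x]} M̂ is an isomorphism. -/
open Submodule

section Aux

variable {R : Type*} [CommRing R] (x : R)
variable {M : Type*} [AddCommGroup M] [Module R M]

lemma aux_pow_inj (hM : Function.Injective (fun m : M => x • m)) (n : ℕ) :
    Function.Injective (fun m : M => x ^ n • m) := by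
  induction n with
  | zero => exact fun a b h => by simpa using h
  | succ n ih =>
      intro m m' h
      simp only [pow_succ, mul_comm, mul_smul] at h
      exact ih (hM h)

/-- In the quotient `M ⧸ I^n • ⊤`, multiplication by `x^n` is zero, where `I = span {x}`. -/
lemma aux_smul_eval (z : AdicCompletion (Ideal.span {x}) M) (n : ℕ) :
    ((x ^ n • z).val n : M ⧸ ((Ideal.span {x}) ^ n • ⊤ : Submodule R M)) = 0 := by
  rw [AdicCompletion.val_smul_apply]
  obtain ⟨w, hw⟩ := Submodule.mkQ_surjective _ (z.val n)
  rw [← hw, ← map_smul]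
  simp only [mkQ_apply, Quotient.mk_eq_zero]
  exact Submodule.smul_mem_smul (Ideal.pow_mem_pow (Ideal.mem_span_singleton_self x) n) trivial

/-- Membership of `I^n • ⊤` gives divisibility by `x^n`. -/
lemma aux_mem_div {m : M} {n : ℕ} (h : m ∈ ((Ideal.span {x}) ^ n • ⊤ : Submodule R M)) :
    ∃ m' : M, m = x ^ n • m' := by
  rw [Ideal.span_singleton_pow, Submodule.ideal_span_singleton_smul,
    ← SetLike.mem_coe, Submodule.coe_pointwise_smul] at h
  obtain ⟨m', -, hm'⟩ := Set.mem_smul_set.mp h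
  exact ⟨m', hm'.symm⟩

/-- The adic completion of an `x`-torsion-free module is `x`-torsion-free. -/
lemma aux_completion_torsionfree (hM : Function.Injective (fun m : M => x • m))
    {z : AdicCompletion (Ideal.span {x}) M} (hz : x • z = 0) : z = 0 := by
  apply AdicCompletion.ext
  intro n
  obtain ⟨w, hw⟩ := Submodule.mkQ_surjective _ (z.val (n + 1))
  have hxw : x • w ∈ ((Ideal.span {x}) ^ (n + 1) • ⊤ : Submodule R M) := by
    have : ((x • z).val (n + 1)) = 0 := by rw [hz]; rfl
    rw [AdicCompletion.val_smul_apply, ← hw, ← map_smul, mkQ_apply, Quotient.mk_eq_zero] at this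
    exact this
  obtain ⟨u, hu⟩ := aux_mem_div x hxw
  have hwu : w = x ^ n • u := by
    apply hM
    simpa [pow_succ, mul_comm, mul_smul] using hu
  have : z.val n = AdicCompletion.transitionMap (Ideal.span {x}) M (Nat.le_succ n) (z.val (n+1)) :=
    (z.property (Nat.le_succ n)).symm
  rw [this, ← hw, hwu, Submodule.factor_mk, mkQ_apply]
  simp only [mkQ_apply, Quotient.mk_eq_zero, AdicCompletion.val_zero_apply]
  exact Submodule.smul_mem_smul (Ideal.pow_mem_pow (Ideal.mem_span_singleton_self x) n) trivial

lemma aux_completion_torsionfree_pow (hM : Function.Injective (fun m : M => x • m))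
    {z : AdicCompletion (Ideal.span {x}) M} {n : ℕ} (hz : x ^ n • z = 0) : z = 0 := by
  induction n with
  | zero => simpa using hz
  | succ n ih =>
      apply ih
      apply aux_completion_torsionfree x hM
      rw [← mul_smul, ← pow_succ']
      exact hz

/-- If `of m` is divisible by `x^n` in the completion, then `m` is divisible by `x^n` in `M`. -/
lemma aux_of_div {m : M} {n : ℕ} {z : AdicCompletion (Ideal.span {x}) M}
    (h : AdicCompletion.of (Ideal.span {x}) M m = x ^ n • z) :
    ∃ m' : M, m = x ^ n • m' := by
  apply aux_mem_div x (n := n)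
  have := congrArg (fun w : AdicCompletion (Ideal.span {x}) M => w.val n) h
  beta_reduce at this
  rw [AdicCompletion.of_apply, aux_smul_eval] at this
  rwa [mkQ_apply, Quotient.mk_eq_zero] at this

end Aux

/-- Beauville–Laszlo for torsion-free modules: let `R` be a commutative ring,
`x ∈ R`, and `M` an `R`-module with no `x`-torsion.  Then the square formed by `M`, the
localization `M[1/x]`, the `x`-adic completion `M̂`, and `M̂[1/x]` is cartesian: the natural map
`M → M[1/x] ×_{M̂[1/x]} M̂` is an isomorphism. -/
theorem statement16 (R : Type*) [CommRing R] (x : R)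
    (M : Type*) [AddCommGroup M] [Module R M]
    (hM : Function.Injective (fun m : M => x • m)) :
    ∀ (a : M →ₗ[R] LocalizedModule (Submonoid.powers x) M)
      (b : M →ₗ[R] AdicCompletion (Ideal.span {x}) M)
      (d : AdicCompletion (Ideal.span {x}) M →ₗ[R]
        LocalizedModule (Submonoid.powers x) (AdicCompletion (Ideal.span {x}) M))
      (c : LocalizedModule (Submonoid.powers x) M →ₗ[R]
        LocalizedModule (Submonoid.powers x) (AdicCompletion (Ideal.span {x}) M)),
      a = LocalizedModule.mkLinearMap (Submonoid.powers x) M →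
      b = AdicCompletion.of (Ideal.span {x}) M →
      d = LocalizedModule.mkLinearMap (Submonoid.powers x) (AdicCompletion (Ideal.span {x}) M) →
      c = IsLocalizedModule.map (Submonoid.powers x)
            (LocalizedModule.mkLinearMap (Submonoid.powers x) M)
            (LocalizedModule.mkLinearMap (Submonoid.powers x)
              (AdicCompletion (Ideal.span {x}) M)) b →
      ((∀ m : M, c (a m) = d (b m)) ∧
       Function.Injective (fun m : M => (a m, b m)) ∧
       (∀ (q : LocalizedModule (Submonoid.powers x) M)
          (y : AdicCompletion (Ideal.span {x}) M),
          c q = d y → ∃ m : M, a m = q ∧ b m = y)) := by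
  intro a b d c ha hb hd hc
  subst ha hb hd hc
  refine ⟨fun m => IsLocalizedModule.map_apply _ _ _ _ m, ?_, ?_⟩
  · intro m m' h
    simp only [Prod.mk.injEq] at h
    have h1 := h.1
    rw [LocalizedModule.mkLinearMap_apply, LocalizedModule.mkLinearMap_apply,
      LocalizedModule.mk_eq] at h1
    obtain ⟨u, hu⟩ := h1
    obtain ⟨k, hk⟩ := u.2
    simp only [one_smul, Submonoid.smul_def, ← hk] at hu
    exact aux_pow_inj x hM k hu
  · intro q y hqy
    induction q using LocalizedModule.induction_on with
    | _ m₀ s =>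
      obtain ⟨n, hn⟩ := s.2
      rw [IsLocalizedModule.map_LocalizedModules, LocalizedModule.mkLinearMap_apply,
        LocalizedModule.mk_eq] at hqy
      obtain ⟨u, hu⟩ := hqy
      obtain ⟨k, hk⟩ := u.2
      simp only [one_smul, Submonoid.smul_def, ← hk, ← hn] at hu
      -- hu : x ^ k • of m₀ = x ^ k • x ^ n • y
      have h3 : AdicCompletion.of (Ideal.span {x}) M (x ^ k • m₀) = x ^ (k + n) • y := by
        rw [map_smul, pow_add, mul_smul]
        exact hu
      obtain ⟨m', hm'⟩ := aux_of_div x h3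
      have hm0 : m₀ = x ^ n • m' := by
        apply aux_pow_inj x hM k
        simpa only [pow_add, mul_smul] using hm'
      have hbm' : AdicCompletion.of (Ideal.span {x}) M m' = y := by
        have h4 : x ^ (k + n) • (AdicCompletion.of (Ideal.span {x}) M m' - y) = 0 := by
          rw [smul_sub, sub_eq_zero, ← map_smul, ← hm']
          exact h3
        have := aux_completion_torsionfree_pow x hM h4
        exact sub_eq_zero.mp this
      refine ⟨m', ?_, hbm'⟩
      rw [LocalizedModule.mkLinearMap_apply, hm0]
      have hcan := LocalizedModule.mk_cancel (M := M) s m'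
      rw [Submonoid.smul_def, ← hn] at hcan
      exact hcan.symm
end
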